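/- Existence of the energy-minimizing (odd) flow: Let G be a network and let D be a real-valued function on the vertices of G. If there exists at least one flow of finite energy whose divergence equals D at every vertex, then there exists a flow θ of finite energy with divergence D such that E(θ) ≤ E(θ') for every finite-energy flow θ' with divergence D. -/

import Mathlib

open scoped ENNReal
open Filter

variable {V : Type*}

/-- A *flow* on a graph: an antisymmetric function on ordered pairs of vertices
that vanishes on non-adjacent pairs. -/
def IsFlow (G : SimpleGraph V) (θ : V → V → ℝ) : Prop :=
  (∀ u v, θ u v = -θ v u) ∧ ∀ u v, ¬G.Adj u v → θ u v = 0

/-- The divergence (source strength) of a flow at a vertex. -/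
noncomputable def divg (G : SimpleGraph V) [G.LocallyFinite] (θ : V → V → ℝ) (v : V) : ℝ :=
  ∑ u ∈ G.neighborFinset v, θ v u

/-- The energy `(1/2) ∑ r(u,v) θ(u,v)²` dissipated by a flow, valued in `[0,∞]`. -/
noncomputable def energy (r θ : V → V → ℝ) : ℝ≥0∞ :=
  2⁻¹ * ∑' p : V × V, ENNReal.ofReal (r p.1 p.2 * θ p.1 p.2 ^ 2)

open Classical in
/-- The source distribution with a unit source at `p` and a unit sink at `q`. -/
noncomputable def pointSource (p q v : V) : ℝ :=
  if v = p then 1 else if v = q then -1 else 0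

/-- The odd resistance: the infimum of the energy over all finite-energy unit
flows from `p` to `q`. -/
noncomputable def oddRes (G : SimpleGraph V) [G.LocallyFinite] (r : V → V → ℝ)
    (p q : V) : ℝ≥0∞ :=
  ⨅ (θ : V → V → ℝ) (_ : IsFlow G θ ∧ energy r θ ≠ ⊤ ∧ divg G θ = pointSource p q),
    energy r θ

/-- The cut resistance: the infimum of the energy over all unit flows from `p` to `q`
vanishing on every edge with an endpoint outside `S`. -/
noncomputable def cutRes (G : SimpleGraph V) [G.LocallyFinite] (r : V → V → ℝ)
    (p q : V) (S : Finset V) : ℝ≥0∞ :=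
  ⨅ (θ : V → V → ℝ) (_ : IsFlow G θ ∧ divg G θ = pointSource p q ∧
      ∀ u v, (u ∉ S ∨ v ∉ S) → θ u v = 0), energy r θ

/-- The even resistance: the infimum of the cut resistances over all finite
vertex sets containing `p` and `q`. -/
noncomputable def evenRes (G : SimpleGraph V) [G.LocallyFinite] (r : V → V → ℝ)
    (p q : V) : ℝ≥0∞ :=
  ⨅ (S : Finset V) (_ : p ∈ S ∧ q ∈ S), cutRes G r p q S

/-- The short resistance: the infimum of the energy over all antisymmetric edge
functions supported on edges with at least one endpoint in `S` whose divergence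
at every vertex of `S` is that of a unit flow from `p` to `q`. -/
noncomputable def shortRes (G : SimpleGraph V) [G.LocallyFinite] (r : V → V → ℝ)
    (p q : V) (S : Finset V) : ℝ≥0∞ :=
  ⨅ (θ : V → V → ℝ) (_ : (∀ u v, θ u v = -θ v u) ∧ (∀ u v, ¬G.Adj u v → θ u v = 0) ∧
      (∀ u v, u ∉ S → v ∉ S → θ u v = 0) ∧
      ∀ v ∈ S, divg G θ v = pointSource p q v), energy r θ

/-- A function on the vertices of a network is harmonic if the net current it
induces out of each vertex is zero. -/
def Harmonic (G : SimpleGraph V) [G.LocallyFinite] (r : V → V → ℝ) (u : V → ℝ) : Prop :=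
  ∀ v, ∑ w ∈ G.neighborFinset v, (u v - u w) / r v w = 0

open Classical in
/-- The Dirichlet energy `(1/2) ∑ (u(v)-u(w))²/r(v,w)` of a function on the vertices. -/
noncomputable def fnEnergy (G : SimpleGraph V) (r : V → V → ℝ) (u : V → ℝ) : ℝ≥0∞ :=
  2⁻¹ * ∑' p : V × V,
    if G.Adj p.1 p.2 then ENNReal.ofReal ((u p.1 - u p.2) ^ 2 / r p.1 p.2) else 0

/-!
Scaling the value of a flow on each edge by `√r` turns the energy into half the squared norm in
`ℓ²(V × V)`. Pulled back along the inverse scaling, the flows with divergence `D` form a closed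
convex set: closed because local finiteness makes each divergence a finite sum of coordinates.
The element of least norm in a nonempty closed convex subset of a Hilbert space is then the
energy minimizer.
-/

section lp

variable {α : Type*} {E : α → Type*} [∀ i, NormedAddCommGroup (E i)]

theorem memℓp_two_of_tsum_enorm_sq_ne_top {f : ∀ i, E i} (hf : ∑' i, ‖f i‖ₑ ^ 2 ≠ ⊤) :
    Memℓp f 2 := by
  have hsum : Summable fun i => ‖f i‖₊ ^ 2 := by
    rw [← ENNReal.tsum_coe_ne_top_iff_summable]
    simpa [enorm_eq_nnnorm] using hf
  refine memℓp_gen ?_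
  simpa [Real.rpow_two] using NNReal.summable_coe.2 hsum

theorem lp.tsum_enorm_sq (f : lp E 2) : ∑' i, ‖f i‖ₑ ^ 2 = ENNReal.ofReal (‖f‖ ^ 2) := by
  have hp : 0 < (2 : ℝ≥0∞).toReal := by norm_num
  have hsum := (lp.memℓp f).summable hp
  have hnorm := lp.norm_rpow_eq_tsum hp f
  simp only [ENNReal.toReal_ofNat, Real.rpow_two] at hsum hnorm
  rw [hnorm, ENNReal.ofReal_tsum_of_nonneg (fun i => sq_nonneg _) hsum]
  simp_rw [ENNReal.ofReal_pow (norm_nonneg _), ofReal_norm]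

end lp

theorem exists_mem_forall_norm_le_of_isClosed_of_convex {F : Type*} [NormedAddCommGroup F]
    [InnerProductSpace ℝ F] [CompleteSpace F] {K : Set F} (hne : K.Nonempty)
    (hclosed : IsClosed K) (hconv : Convex ℝ K) : ∃ w ∈ K, ∀ g ∈ K, ‖w‖ ≤ ‖g‖ := by
  obtain ⟨w, hwK, hw⟩ := exists_norm_eq_iInf_of_complete_convex hne hclosed.isComplete hconv 0
  refine ⟨w, hwK, fun g hg => ?_⟩
  simp only [zero_sub, norm_neg] at hw
  exact hw ▸ ciInf_le ⟨0, Set.forall_mem_range.2 fun _ => norm_nonneg _⟩ (⟨g, hg⟩ : K)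

section Flows

variable (G : SimpleGraph V) [G.LocallyFinite]

def flowsWithDivg (D : V → ℝ) : Set (V → V → ℝ) :=
  {θ | IsFlow G θ ∧ divg G θ = D}

theorem isClosed_flowsWithDivg (D : V → ℝ) : IsClosed (flowsWithDivg G D) := by
  have hev : ∀ u v, Continuous fun θ : V → V → ℝ => θ u v := fun u v =>
    (continuous_apply v).comp (continuous_apply u)
  simp only [flowsWithDivg, IsFlow, Set.ofPred_and, Set.ofPred_forall, funext_iff, divg]
  refine .inter (.inter ?_ ?_) ?_
  · exact isClosed_iInter fun u => isClosed_iInter fun v => isClosed_eq (hev u v) (hev v u).neg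
  · exact isClosed_iInter fun u => isClosed_iInter fun v =>
      isClosed_iInter fun _ => isClosed_eq (hev u v) continuous_const
  · exact isClosed_iInter fun v =>
      isClosed_eq (continuous_finsetSum _ fun u _ => hev v u) continuous_const

theorem convex_flowsWithDivg (D : V → ℝ) : Convex ℝ (flowsWithDivg G D) := by
  rintro θ ⟨⟨hθ_anti, hθ_adj⟩, hθ_div⟩ η ⟨⟨hη_anti, hη_adj⟩, hη_div⟩ a b - - hab
  refine ⟨⟨fun u v => ?_, fun u v h => ?_⟩, ?_⟩
  · simp only [Pi.add_apply, Pi.smul_apply, smul_eq_mul, hθ_anti u v, hη_anti u v]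
    ring
  · simp [hθ_adj u v h, hη_adj u v h]
  · ext v
    simp only [divg, Pi.add_apply, Pi.smul_apply, smul_eq_mul, Finset.sum_add_distrib,
      ← Finset.mul_sum]
    rw [← divg, ← divg, hθ_div, hη_div, ← add_mul, hab, one_mul]

end Flows

section EnergyNorm

variable (G : SimpleGraph V) (r : V → V → ℝ)

open Classical in
noncomputable def flowToL2 (θ : V → V → ℝ) (p : V × V) : ℝ :=
  if G.Adj p.1 p.2 then √(r p.1 p.2) * θ p.1 p.2 else 0

open Classical in
/-- Coordinates off the edges are discarded, so `energy_l2ToFlow_le` is only an inequality. -/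
noncomputable def l2ToFlow : lp (fun _ : V × V => ℝ) 2 →L[ℝ] (V → V → ℝ) where
  toFun f u v := if G.Adj u v then f (u, v) / √(r u v) else 0
  map_add' f g := by
    ext u v
    simp only [lp.coeFn_add, Pi.add_apply]
    split_ifs <;> simp [add_div]
  map_smul' c f := by
    ext u v
    simp only [lp.coeFn_smul, Pi.smul_apply, smul_eq_mul, RingHom.id_apply]
    split_ifs <;> simp [mul_div_assoc]
  cont := continuous_pi fun u => continuous_pi fun v => by
    split_ifs
    · exact ((lp.lipschitzWith_one_eval 2 (u, v)).continuous).div_const _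
    · exact continuous_const

variable {G r}

theorem energy_eq_tsum_flowToL2 (hr : ∀ u v, G.Adj u v → 0 ≤ r u v) {θ : V → V → ℝ}
    (hθ : ∀ u v, ¬G.Adj u v → θ u v = 0) :
    energy r θ = 2⁻¹ * ∑' p, ‖flowToL2 G r θ p‖ₑ ^ 2 := by
  refine congrArg _ (tsum_congr fun p => ?_)
  rw [flowToL2]
  split_ifs with h
  · rw [← ofReal_norm, ← ENNReal.ofReal_pow (norm_nonneg _), Real.norm_eq_abs, sq_abs,
      mul_pow, Real.sq_sqrt (hr _ _ h)]
  · simp [hθ _ _ h]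

theorem l2ToFlow_apply (f : lp (fun _ : V × V => ℝ) 2) (u v : V) [Decidable (G.Adj u v)] :
    l2ToFlow G r f u v = if G.Adj u v then f (u, v) / √(r u v) else 0 := by
  simp only [l2ToFlow, ContinuousLinearMap.coe_mk', LinearMap.coe_mk, AddHom.coe_mk]
  congr

theorem exists_l2ToFlow_eq (hr : ∀ u v, G.Adj u v → 0 < r u v) {θ : V → V → ℝ}
    (hθ : ∀ u v, ¬G.Adj u v → θ u v = 0) (hE : energy r θ ≠ ⊤) :
    ∃ f, l2ToFlow G r f = θ ∧ energy r θ = 2⁻¹ * ENNReal.ofReal (‖f‖ ^ 2) := by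
  classical
  rw [energy_eq_tsum_flowToL2 (fun u v h => (hr u v h).le) hθ] at hE ⊢
  let f : lp (fun _ : V × V => ℝ) 2 :=
    ⟨flowToL2 G r θ, memℓp_two_of_tsum_enorm_sq_ne_top (by simpa [ENNReal.mul_eq_top] using hE)⟩
  refine ⟨f, funext₂ fun u v => ?_, by rw [← lp.tsum_enorm_sq f]⟩
  rw [l2ToFlow_apply]
  split_ifs with h
  · simp only [f, flowToL2, h, if_true]
    exact mul_div_cancel_left₀ _ (Real.sqrt_ne_zero'.2 (hr u v h))
  · exact (hθ u v h).symm

theorem energy_l2ToFlow_le (hr : ∀ u v, G.Adj u v → 0 ≤ r u v)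
    (f : lp (fun _ : V × V => ℝ) 2) :
    energy r (l2ToFlow G r f) ≤ 2⁻¹ * ENNReal.ofReal (‖f‖ ^ 2) := by
  classical
  rw [← lp.tsum_enorm_sq]
  refine mul_le_mul_right (ENNReal.tsum_le_tsum fun p => ?_) _
  rw [l2ToFlow_apply]
  split_ifs with h
  · rw [← ofReal_norm, ← ENNReal.ofReal_pow (norm_nonneg _), Real.norm_eq_abs, sq_abs,
      div_pow, Real.sq_sqrt (hr _ _ h), mul_div_assoc']
    exact ENNReal.ofReal_le_ofReal (div_le_of_le_mul₀ (hr _ _ h) (sq_nonneg _) (mul_comm _ _).le)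
  · simp

end EnergyNorm

theorem energy_minimizing_flow_exists_general
    (G : SimpleGraph V) [G.LocallyFinite]
    (r : V → V → ℝ) (hr_pos : ∀ u v, G.Adj u v → 0 < r u v)
    (D : V → ℝ)
    (hex : ∃ θ, IsFlow G θ ∧ energy r θ ≠ ⊤ ∧ divg G θ = D) :
    ∃ θ, IsFlow G θ ∧ energy r θ ≠ ⊤ ∧ divg G θ = D ∧
      ∀ θ', IsFlow G θ' → energy r θ' ≠ ⊤ → divg G θ' = D →
        energy r θ ≤ energy r θ' := by
  obtain ⟨θ₀, hθ₀, hE₀, hD₀⟩ := hex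
  obtain ⟨f₀, hf₀, -⟩ := exists_l2ToFlow_eq hr_pos hθ₀.2 hE₀
  obtain ⟨w, ⟨hw_flow, hw_div⟩, hw_min⟩ := exists_mem_forall_norm_le_of_isClosed_of_convex
    (K := l2ToFlow G r ⁻¹' flowsWithDivg G D) ⟨f₀, by rw [Set.mem_preimage, hf₀]; exact ⟨hθ₀, hD₀⟩⟩
    ((isClosed_flowsWithDivg G D).preimage (l2ToFlow G r).continuous)
    ((convex_flowsWithDivg G D).linear_preimage (l2ToFlow G r).toLinearMap)
  have hE_le := energy_l2ToFlow_le (fun u v h => (hr_pos u v h).le) w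
  refine ⟨l2ToFlow G r w, hw_flow, ne_top_of_le_ne_top (by finiteness) hE_le, hw_div, ?_⟩
  intro θ hθ hE hD
  obtain ⟨f, rfl, hEf⟩ := exists_l2ToFlow_eq hr_pos hθ.2 hE
  calc energy r (l2ToFlow G r w) ≤ 2⁻¹ * ENNReal.ofReal (‖w‖ ^ 2) := hE_le
    _ ≤ 2⁻¹ * ENNReal.ofReal (‖f‖ ^ 2) := by
      gcongr
      exact hw_min f ⟨hθ, hD⟩
    _ = energy r (l2ToFlow G r f) := hEf.symm

/-- **Existence of the energy-minimizing (odd) flow.** If some finite-energy flow has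
divergence `D`, then there is a finite-energy flow with divergence `D` of minimal energy
among all finite-energy flows with divergence `D`. -/
theorem energy_minimizing_flow_exists
    (G : SimpleGraph V) [G.LocallyFinite] (hG : G.Connected)
    (r : V → V → ℝ) (hr_pos : ∀ u v, G.Adj u v → 0 < r u v)
    (hr_symm : ∀ u v, r u v = r v u)
    (D : V → ℝ)
    (hex : ∃ θ, IsFlow G θ ∧ energy r θ ≠ ⊤ ∧ divg G θ = D) :
    ∃ θ, IsFlow G θ ∧ energy r θ ≠ ⊤ ∧ divg G θ = D ∧
      ∀ θ', IsFlow G θ' → energy r θ' ≠ ⊤ → divg G θ' = D →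
        energy r θ ≤ energy r θ' :=
  energy_minimizing_flow_exists_general G r hr_pos D hex
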